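/- arXiv:2602.19782 — 2 statements merged into one kernel-verified Lean document; each statement's English description precedes it below -/
import Mathlib

section
/- Let W be an ℝ^p-valued and V an ℝ^q-valued square-integrable random vector on a probability space, with Cov(W_i, V_j) = 0 for all i, j, and suppose the covariance matrix Σ_W of W is positive definite. Let B_W ∈ ℝ^{p̂×p} have full column rank p, and let B_C ∈ ℝ^{q̂×p}, B_V ∈ ℝ^{q̂×q}, c₁ ∈ ℝ^{p̂}, c₂ ∈ ℝ^{q̂}. Define Ŵ := B_W W + c₁ and V̂ := B_C W + B_V V + c₂. If Cov(Ŵ_i, V̂_j) = 0 for all i, j (in particular, if Ŵ and V̂ are independent and square-integrable), then B_C = 0 and hence V̂ = B_V V + c₂. -/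
/-!
Bilinearity of covariance gives `Cov(Ŵ, V̂) = B_W Σ_W B_Cᵀ + B_W Cov(W, V) B_Vᵀ = B_W Σ_W B_Cᵀ`.
If this vanishes, cancelling `B_W` (full column rank) and then `Σ_W` (positive definite, hence
invertible) leaves `B_Cᵀ = 0`.
-/

open MeasureTheory

/-- The covariance `Cov(X, Y) = E[(X − E X)(Y − E Y)]` of two real random variables. -/
noncomputable def cov {Ω : Type*} [MeasurableSpace Ω] (μ : Measure Ω) (X Y : Ω → ℝ) : ℝ :=
  ∫ ω, (X ω - ∫ x, X x ∂μ) * (Y ω - ∫ x, Y x ∂μ) ∂μ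

open ProbabilityTheory Matrix

section CrossCovariance

variable {Ω : Type*} [MeasurableSpace Ω] {μ : Measure Ω} {ι κ m n : Type*}

variable (μ) in
noncomputable def crossCovMatrix (X : Ω → ι → ℝ) (Y : Ω → κ → ℝ) : Matrix ι κ ℝ :=
  Matrix.of fun i j => cov μ (fun ω => X ω i) (fun ω => Y ω j)

lemma crossCovMatrix_apply (X : Ω → ι → ℝ) (Y : Ω → κ → ℝ) (i : ι) (j : κ) :
    crossCovMatrix μ X Y i j = covariance (fun ω => X ω i) (fun ω => Y ω j) μ := rfl

lemma memLp_mulVec_apply [Fintype ι] {X : Ω → ι → ℝ}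
    (hX : ∀ i, MemLp (fun ω => X ω i) 2 μ) (A : Matrix m ι ℝ) (k : m) :
    MemLp (fun ω => (A *ᵥ X ω) k) 2 μ :=
  memLp_finsetSum _ fun i _ => (hX i).const_mul (A k i)

lemma crossCovMatrix_mulVec_add_const [IsProbabilityMeasure μ] [Fintype ι] [Fintype κ]
    {X : Ω → ι → ℝ} {Y : Ω → κ → ℝ}
    (hX : ∀ i, MemLp (fun ω => X ω i) 2 μ) (hY : ∀ j, MemLp (fun ω => Y ω j) 2 μ)
    (A : Matrix m ι ℝ) (B : Matrix n κ ℝ) (a : m → ℝ) (b : n → ℝ) :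
    crossCovMatrix μ (fun ω => A *ᵥ X ω + a) (fun ω => B *ᵥ Y ω + b)
      = A * crossCovMatrix μ X Y * Bᵀ := by
  ext k l
  simp only [crossCovMatrix_apply, Pi.add_apply]
  rw [covariance_add_const_left ((memLp_mulVec_apply hX A k).integrable one_le_two),
    covariance_add_const_right ((memLp_mulVec_apply hY B l).integrable one_le_two)]
  simp only [mulVec, dotProduct]
  rw [covariance_fun_sum_fun_sum (fun i => (hX i).const_mul _) (fun j => (hY j).const_mul _)]
  simp only [covariance_const_mul_left, covariance_const_mul_right, mul_apply, transpose_apply,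
    crossCovMatrix_apply, Finset.sum_mul]
  rw [Finset.sum_comm]
  exact Finset.sum_congr rfl fun i _ => Finset.sum_congr rfl fun j _ => by ring

lemma crossCovMatrix_sumElim_right (X : Ω → ι → ℝ) (Y : Ω → κ → ℝ) (Z : Ω → n → ℝ) :
    crossCovMatrix μ X (fun ω => Sum.elim (Y ω) (Z ω))
      = fromCols (crossCovMatrix μ X Y) (crossCovMatrix μ X Z) := by
  ext i (j | j) <;> rfl

end CrossCovariance

lemma Matrix.eq_zero_of_mul_eq_zero_of_fullColumnRank {m n k : Type*} [Fintype n]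
    {A : Matrix m n ℝ} (hA : ∀ v, A *ᵥ v = 0 → v = 0) {M : Matrix n k ℝ} (h : A * M = 0) :
    M = 0 := by
  ext i j
  have hcol : A *ᵥ (fun i => M i j) = 0 := funext fun l => congrFun (congrFun h l) j
  exact congrFun (hA _ hcol) i

lemma Matrix.PosDef.eq_zero_of_mul_eq_zero {n k : Type*} [Fintype n] [DecidableEq n]
    {S : Matrix n n ℝ} (hS : S.PosDef) {M : Matrix n k ℝ} (h : S * M = 0) : M = 0 := by
  have hdet : IsUnit S.det := (isUnit_iff_isUnit_det S).mp hS.isUnit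
  simpa [h] using (nonsing_inv_mul_cancel_left S M hdet).symm

/-- **No leakage of `W` into the learned `V̂` under uncorrelatedness.**
Let `W ⟂̸ V` be square-integrable with `Cov(W_i, V_j) = 0` and `Σ_W ≻ 0`.  Let
`Ŵ = B_W W + c₁` with `B_W` of full column rank and `V̂ = B_C W + B_V V + c₂`.  If
`Cov(Ŵ_i, V̂_j) = 0` for all `i, j`, then `B_C = 0` and hence `V̂ = B_V V + c₂`. -/
theorem leakage_matrix_eq_zero_of_uncorrelated
    {Ω : Type*} [MeasurableSpace Ω] (μ : Measure Ω) [IsProbabilityMeasure μ]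
    {p q phat qhat : ℕ}
    (W : Ω → Fin p → ℝ) (V : Ω → Fin q → ℝ)
    (hW : ∀ i, MemLp (fun ω => W ω i) 2 μ)
    (hV : ∀ j, MemLp (fun ω => V ω j) 2 μ)
    (h_uncorr : ∀ i j, cov μ (fun ω => W ω i) (fun ω => V ω j) = 0)
    (h_posdef : (Matrix.of fun i j : Fin p =>
      cov μ (fun ω => W ω i) (fun ω => W ω j)).PosDef)
    (B_W : Matrix (Fin phat) (Fin p) ℝ)
    (hB_W : ∀ v : Fin p → ℝ, B_W.mulVec v = 0 → v = 0)
    (B_C : Matrix (Fin qhat) (Fin p) ℝ) (B_V : Matrix (Fin qhat) (Fin q) ℝ)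
    (c₁ : Fin phat → ℝ) (c₂ : Fin qhat → ℝ)
    (What : Ω → Fin phat → ℝ) (Vhat : Ω → Fin qhat → ℝ)
    (hWhat : What = fun ω => B_W.mulVec (W ω) + c₁)
    (hVhat : Vhat = fun ω => B_C.mulVec (W ω) + B_V.mulVec (V ω) + c₂)
    (h_hat_uncorr : ∀ i j, cov μ (fun ω => What ω i) (fun ω => Vhat ω j) = 0) :
    B_C = 0 ∧ Vhat = fun ω => B_V.mulVec (V ω) + c₂ := by
  have hWV : ∀ s, MemLp (fun ω => Sum.elim (W ω) (V ω) s) 2 μ := Sum.rec hW hV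
  have hVhat_block : Vhat = fun ω => fromCols B_C B_V *ᵥ Sum.elim (W ω) (V ω) + c₂ := by
    simp only [hVhat, fromCols_mulVec_sumElim]
  have hcross : B_W * (crossCovMatrix μ W W * B_Cᵀ) = 0 := by
    have h0 : crossCovMatrix μ What Vhat = 0 := Matrix.ext h_hat_uncorr
    have hWV0 : crossCovMatrix μ W V = 0 := Matrix.ext h_uncorr
    rwa [hWhat, hVhat_block, crossCovMatrix_mulVec_add_const hW hWV, crossCovMatrix_sumElim_right,
      hWV0, transpose_fromCols, Matrix.mul_assoc, fromCols_mul_fromRows, Matrix.zero_mul,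
      add_zero] at h0
  have hBC : B_C = 0 := by
    simpa using
      h_posdef.eq_zero_of_mul_eq_zero (eq_zero_of_mul_eq_zero_of_fullColumnRank hB_W hcross)
  exact ⟨hBC, by simp [hVhat, hBC]⟩
end

section
/- Let ε_H, ε_V, ε_W, ε_D, ε_Y be mutually independent, square-integrable, mean-zero real random variables with strictly positive variances σ_H², σ_V², σ_W², σ_D², σ_Y², and let θ ∈ ℝ. Define H := ε_H, V := H + ε_V, W := ε_W, D := V + W + H + ε_D, Y := θD + H + ε_Y, and V̂ := V + W. Define the linearly partialled-out residuals W̃ := W − (Cov(W, V̂)/Var(V̂)) V̂, D̃ := D − (Cov(D, V̂)/Var(V̂)) V̂, Ỹ := Y − (Cov(Y, V̂)/Var(V̂)) V̂. Then Cov(W̃, D̃) = −σ_H² σ_W² / (σ_H² + σ_V² + σ_W²) ≠ 0 and Cov(W̃, Ỹ) = (θ + 1) · Cov(W̃, D̃); hence the probability limit Cov(W̃, Ỹ)/Cov(W̃, D̃) of the partialled-out instrumental-variable estimator equals θ + 1, i.e., its asymptotic bias is 1. -/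
open MeasureTheory ProbabilityTheory

/-!
Every variable of the model is a linear combination of the independent noises, so all covariances
are weighted sums of the noise variances, and partialling out `V̂` turns `Cov(X, Z)` into the
partial covariance `Cov(X, Z) − Cov(X, V̂) Cov(Z, V̂) / Var(V̂)`. Although `W` and `H` are
independent, both enter the collider `V̂`, so `Cov(W̃, H̃) = −σ_H² σ_W² / Var(V̂)`, which is also
`Cov(W̃, D̃)`. Since `Ỹ = θ D̃ + H̃ + ε̃_Y` and `ε̃_Y` is uncorrelated with `W̃`, the IV ratio is `θ + 1`.
-/

lemma cov_eq_covariance {Ω : Type*} [MeasurableSpace Ω] (μ : Measure Ω) (X Y : Ω → ℝ) :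
    cov μ X Y = cov[X, Y; μ] :=
  rfl

section

variable {Ω : Type*} [MeasurableSpace Ω] {μ : Measure Ω} [IsFiniteMeasure μ]

lemma covariance_residuals {X Z V : Ω → ℝ} (hX : MemLp X 2 μ) (hZ : MemLp Z 2 μ)
    (hV : MemLp V 2 μ) :
    cov[fun ω ↦ X ω - cov[X, V; μ] / cov[V, V; μ] * V ω,
        fun ω ↦ Z ω - cov[Z, V; μ] / cov[V, V; μ] * V ω; μ] =
      cov[X, Z; μ] - cov[X, V; μ] * cov[Z, V; μ] / cov[V, V; μ] := by
  rw [covariance_fun_sub_fun_sub hX (hV.const_mul _) hZ (hV.const_mul _),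
    covariance_const_mul_left, covariance_const_mul_right, covariance_const_mul_left,
    covariance_const_mul_right, covariance_comm V Z]
  rcases eq_or_ne cov[V, V; μ] 0 with hVV | hVV
  · simp [hVV]
  · field_simp
    ring

lemma covariance_sum_mul_sum_mul_of_uncorrelated {ι : Type*} [Fintype ι] {ε : ι → Ω → ℝ}
    (hL2 : ∀ i, MemLp (ε i) 2 μ) (huncorr : Pairwise fun i j ↦ cov[ε i, ε j; μ] = 0)
    (a b : ι → ℝ) :
    cov[fun ω ↦ ∑ i, a i * ε i ω, fun ω ↦ ∑ i, b i * ε i ω; μ] =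
      ∑ i, a i * b i * Var[ε i; μ] := by
  rw [covariance_fun_sum_fun_sum (X := fun i ω ↦ a i * ε i ω) (Y := fun i ω ↦ b i * ε i ω)
    (fun i ↦ (hL2 i).const_mul (a i)) (fun i ↦ (hL2 i).const_mul (b i))]
  refine Finset.sum_congr rfl fun i _ ↦ ?_
  rw [Fintype.sum_eq_single i fun j hji ↦ by
    rw [covariance_const_mul_left, covariance_const_mul_right, huncorr hji.symm, mul_zero, mul_zero]]
  rw [covariance_const_mul_left, covariance_const_mul_right,
    covariance_self (hL2 i).aestronglyMeasurable.aemeasurable]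
  ring

end

theorem po_iv_collider_bias_general
    {Ω : Type*} [MeasurableSpace Ω] (μ : Measure Ω) [IsProbabilityMeasure μ]
    (εH εV εW εD εY : Ω → ℝ)
    (h_indep : iIndepFun ![εH, εV, εW, εD, εY] μ)
    (hL2 : ∀ i, MemLp (![εH, εV, εW, εD, εY] i) 2 μ)
    (sH2 sV2 sW2 : ℝ)
    (hsH2 : variance εH μ = sH2) (hsV2 : variance εV μ = sV2)
    (hsW2 : variance εW μ = sW2)
    (hsH2_pos : 0 < sH2) (hsV2_pos : 0 < sV2) (hsW2_pos : 0 < sW2)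
    (θ : ℝ)
    (H V W D Y Vhat : Ω → ℝ)
    (hH : H = εH)
    (hV : V = fun ω => H ω + εV ω)
    (hW : W = εW)
    (hD : D = fun ω => V ω + W ω + H ω + εD ω)
    (hY : Y = fun ω => θ * D ω + H ω + εY ω)
    (hVhat : Vhat = fun ω => V ω + W ω)
    (Wt Dt Yt : Ω → ℝ)
    (hWt : Wt = fun ω => W ω - (cov μ W Vhat / cov μ Vhat Vhat) * Vhat ω)
    (hDt : Dt = fun ω => D ω - (cov μ D Vhat / cov μ Vhat Vhat) * Vhat ω)
    (hYt : Yt = fun ω => Y ω - (cov μ Y Vhat / cov μ Vhat Vhat) * Vhat ω) :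
    cov μ Wt Dt = -(sH2 * sW2) / (sH2 + sV2 + sW2) ∧
    cov μ Wt Dt ≠ 0 ∧
    cov μ Wt Yt = (θ + 1) * cov μ Wt Dt ∧
    cov μ Wt Yt / cov μ Wt Dt = θ + 1 := by
  set ε : Fin 5 → Ω → ℝ := ![εH, εV, εW, εD, εY]
  have huncorr : Pairwise fun i j ↦ cov[ε i, ε j; μ] = 0 :=
    fun i j hij ↦ (h_indep.indepFun hij).covariance_eq_zero (hL2 i) (hL2 j)
  have memLp_lin (a : Fin 5 → ℝ) : MemLp (fun ω ↦ ∑ i, a i * ε i ω) 2 μ :=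
    memLp_finsetSum _ fun i _ ↦ (hL2 i).const_mul (a i)
  obtain ⟨rfl, rfl, rfl, rfl⟩ :
      W = (fun ω ↦ ∑ i, ![0, 0, 1, 0, 0] i * ε i ω) ∧
      Vhat = (fun ω ↦ ∑ i, ![1, 1, 1, 0, 0] i * ε i ω) ∧
      D = (fun ω ↦ ∑ i, ![2, 1, 1, 1, 0] i * ε i ω) ∧
      Y = (fun ω ↦ ∑ i, ![2 * θ + 1, θ, θ, θ, 1] i * ε i ω) := by
    subst hH hV hW hD hY hVhat
    refine ⟨?_, ?_, ?_, ?_⟩ <;> funext ω <;>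
      simp only [ε, Fin.sum_univ_five, Matrix.cons_val_zero, Matrix.cons_val_one, Matrix.cons_val] <;> ring
  have hS : sH2 + sV2 + sW2 ≠ 0 := by positivity
  obtain ⟨hWD, hWY⟩ : cov μ Wt Dt = -(sH2 * sW2) / (sH2 + sV2 + sW2) ∧
      cov μ Wt Yt = (θ + 1) * cov μ Wt Dt := by
    subst hWt hDt hYt
    simp only [cov_eq_covariance]
    rw [covariance_residuals (memLp_lin _) (memLp_lin _) (memLp_lin _),
      covariance_residuals (memLp_lin _) (memLp_lin _) (memLp_lin _)]
    simp only [covariance_sum_mul_sum_mul_of_uncorrelated hL2 huncorr]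
    simp only [ε, Fin.sum_univ_five, Matrix.cons_val_zero, Matrix.cons_val_one, Matrix.cons_val,
      hsH2, hsV2, hsW2, zero_mul, mul_zero, one_mul, mul_one, zero_add, add_zero]
    constructor <;> field_simp <;> ring
  have hne : cov μ Wt Dt ≠ 0 := hWD ▸ div_ne_zero (neg_ne_zero.2 (by positivity)) hS
  exact ⟨hWD, hne, hWY, by rw [hWY, mul_div_cancel_right₀ _ hne]⟩

/-- **Collider bias of the partialled-out IV estimator.**
With mutually independent mean-zero noises, `H = ε_H`, `V = H + ε_V`, `W = ε_W`,
`D = V + W + H + ε_D`, `Y = θ D + H + ε_Y`, and the learned representation `V̂ = V + W`,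
the linearly partialled-out residuals satisfy
`Cov(W̃, D̃) = −σ_H² σ_W² / (σ_H² + σ_V² + σ_W²) ≠ 0` and `Cov(W̃, Ỹ) = (θ+1) Cov(W̃, D̃)`;
hence the probability limit `Cov(W̃, Ỹ)/Cov(W̃, D̃)` of the PO-IV estimator equals `θ + 1`,
i.e. its asymptotic bias is `1`. -/
theorem po_iv_collider_bias
    {Ω : Type*} [MeasurableSpace Ω] (μ : Measure Ω) [IsProbabilityMeasure μ]
    (εH εV εW εD εY : Ω → ℝ)
    (hmeas : ∀ i, Measurable (![εH, εV, εW, εD, εY] i))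
    (h_indep : iIndepFun ![εH, εV, εW, εD, εY] μ)
    (hL2 : ∀ i, MemLp (![εH, εV, εW, εD, εY] i) 2 μ)
    (h_mean : ∀ i, ∫ ω, (![εH, εV, εW, εD, εY] i) ω ∂μ = 0)
    (sH2 sV2 sW2 sD2 sY2 : ℝ)
    (hsH2 : variance εH μ = sH2) (hsV2 : variance εV μ = sV2)
    (hsW2 : variance εW μ = sW2) (hsD2 : variance εD μ = sD2)
    (hsY2 : variance εY μ = sY2)
    (hsH2_pos : 0 < sH2) (hsV2_pos : 0 < sV2) (hsW2_pos : 0 < sW2)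
    (hsD2_pos : 0 < sD2) (hsY2_pos : 0 < sY2)
    (θ : ℝ)
    (H V W D Y Vhat : Ω → ℝ)
    (hH : H = εH)
    (hV : V = fun ω => H ω + εV ω)
    (hW : W = εW)
    (hD : D = fun ω => V ω + W ω + H ω + εD ω)
    (hY : Y = fun ω => θ * D ω + H ω + εY ω)
    (hVhat : Vhat = fun ω => V ω + W ω)
    (Wt Dt Yt : Ω → ℝ)
    (hWt : Wt = fun ω => W ω - (cov μ W Vhat / cov μ Vhat Vhat) * Vhat ω)
    (hDt : Dt = fun ω => D ω - (cov μ D Vhat / cov μ Vhat Vhat) * Vhat ω)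
    (hYt : Yt = fun ω => Y ω - (cov μ Y Vhat / cov μ Vhat Vhat) * Vhat ω) :
    cov μ Wt Dt = -(sH2 * sW2) / (sH2 + sV2 + sW2) ∧
    cov μ Wt Dt ≠ 0 ∧
    cov μ Wt Yt = (θ + 1) * cov μ Wt Dt ∧
    cov μ Wt Yt / cov μ Wt Dt = θ + 1 :=
  po_iv_collider_bias_general μ εH εV εW εD εY h_indep hL2 sH2 sV2 sW2 hsH2 hsV2 hsW2 hsH2_pos
    hsV2_pos hsW2_pos θ H V W D Y Vhat hH hV hW hD hY hVhat Wt Dt Yt hWt hDt hYt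
end
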